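/- Up consistency: Let F(p⃗) = □G(p⃗) be a template, Γ a CS(V)-maximally consistent subset of Fml_J(V), and φ⃗ a sequence of Henkin formulas. If Γ^# ∪ ⟦¬G(φ⃗)⟧ is CS(V)-consistent, then Γ ∪ ⟦¬F(φ⃗)⟧ is CS(V)-consistent. -/

import Mathlib

/-- Justification terms of first-order justification logic (FOLPb / FOJT45). -/
inductive JTerm : Type
  | jvar : Nat → JTerm
  | jconst : Nat → JTerm
  | app : JTerm → JTerm → JTerm
  | plus : JTerm → JTerm → JTerm
  | bang : JTerm → JTerm
  | bb : JTerm → JTerm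
  | gen : Nat → JTerm → JTerm
  | quest : JTerm → JTerm
  deriving DecidableEq

namespace JTerm

/-- Basic variables occurring as `gen` subscripts in a term. -/
def gvars : JTerm → Finset Nat
  | jvar _ => ∅
  | jconst _ => ∅
  | app t s => t.gvars ∪ s.gvars
  | plus t s => t.gvars ∪ s.gvars
  | bang t => t.gvars
  | bb t => t.gvars
  | gen x t => insert x t.gvars
  | quest t => t.gvars

end JTerm

/-- Formulas of first-order justification logic.  Individual "variables" are either
basic variables (`Sum.inl n`, which may be quantified and appear as `gen` subscripts)
or extra constants from `V` (witness variables / domain members), which are never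
quantified. -/
inductive Fml (V : Type) : Type
  | atom : Nat → List (Nat ⊕ V) → Fml V
  | bot : Fml V
  | imp : Fml V → Fml V → Fml V
  | all : Nat → Fml V → Fml V
  | box : JTerm → Finset (Nat ⊕ V) → Fml V → Fml V

namespace Fml

variable {V : Type} [DecidableEq V]

def neg (φ : Fml V) : Fml V := φ.imp .bot
def orr (φ ψ : Fml V) : Fml V := φ.neg.imp ψ
def andd (φ ψ : Fml V) : Fml V := (φ.imp ψ.neg).neg
def ex (x : Nat) (φ : Fml V) : Fml V := (Fml.all x φ.neg).neg

/-- Free individual variables.  Following the paper, `fv (t :_X φ) = X`. -/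
def fv : Fml V → Finset (Nat ⊕ V)
  | atom _ l => l.toFinset
  | bot => ∅
  | imp φ ψ => φ.fv ∪ ψ.fv
  | all x φ => φ.fv \ {Sum.inl x}
  | box _ X _ => X

/-- Substitution of `e` for the free occurrences of the individual variable `x`. -/
def subst (x e : Nat ⊕ V) : Fml V → Fml V
  | atom P l => atom P (l.map fun v => if v = x then e else v)
  | bot => bot
  | imp φ ψ => imp (subst x e φ) (subst x e ψ)
  | all y φ => if x = Sum.inl y then all y φ else all y (subst x e φ)
  | box t X φ =>
      if x ∈ X then box t (X.image fun v => if v = x then e else v) (subst x e φ)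
      else box t X φ

/-- `e` is free for `x` in the given formula. -/
def freeFor (e x : Nat ⊕ V) : Fml V → Prop
  | atom _ _ => True
  | bot => True
  | imp φ ψ => freeFor e x φ ∧ freeFor e x ψ
  | all y φ => x ∉ (Fml.all y φ).fv ∨ (e ≠ Sum.inl y ∧ freeFor e x φ)
  | box _ X φ => freeFor e x φ ∧ (e ∈ φ.fv → e ∈ X)

/-- All individual variables occurring in a formula (free, bound, in subscripts,
or as `gen` subscripts of justification terms). -/
def allVars : Fml V → Finset (Nat ⊕ V)
  | atom _ l => l.toFinset
  | bot => ∅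
  | imp φ ψ => φ.allVars ∪ ψ.allVars
  | all x φ => insert (Sum.inl x) φ.allVars
  | box t X φ => X ∪ t.gvars.image Sum.inl ∪ φ.allVars

/-- The set of witness variables / domain constants (`Sum.inr`-variables) occurring
in a formula. -/
def wvars (φ : Fml V) : Finset (Nat ⊕ V) := φ.allVars.filter fun v => v.isRight

/-- Free basic variables. -/
def fbv (φ : Fml V) : Finset Nat :=
  φ.fv.biUnion fun v => match v with | Sum.inl n => {n} | Sum.inr _ => ∅

/-- Universal closure (over the free basic variables). -/
noncomputable def close (φ : Fml V) : Fml V := φ.fbv.toList.foldr Fml.all φ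

/-- Renaming of the free individual variables of a formula. -/
def renameFree (ρ : (Nat ⊕ V) → (Nat ⊕ V)) : Fml V → Fml V
  | atom P l => atom P (l.map ρ)
  | bot => bot
  | imp φ ψ => imp (renameFree ρ φ) (renameFree ρ ψ)
  | all y φ => all y (renameFree (Function.update ρ (Sum.inl y) (Sum.inl y)) φ)
  | box t X φ => box t (X.image ρ) (renameFree (fun v => if v ∈ X then ρ v else v) φ)

/-- Replacement of *every* occurrence of the individual variable `a` by `e`
(used for witness variables, which are never bound). -/
def replaceAll (a e : Nat ⊕ V) : Fml V → Fml V
  | atom P l => atom P (l.map fun v => if v = a then e else v)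
  | bot => bot
  | imp φ ψ => imp (replaceAll a e φ) (replaceAll a e ψ)
  | all x φ => all x (replaceAll a e φ)
  | box t X φ => box t (X.image fun v => if v = a then e else v) (replaceAll a e φ)

/-- Change the type of extra constants. -/
def vmap {V' : Type} [DecidableEq V'] (f : V → V') : Fml V → Fml V'
  | atom P l => atom P (l.map (Sum.map id f))
  | bot => bot
  | imp φ ψ => imp (vmap f φ) (vmap f ψ)
  | all x φ => all x (vmap f φ)
  | box t X φ => box t (X.image (Sum.map id f)) (vmap f φ)

def size : Fml V → Nat
  | atom _ _ => 1
  | bot => 1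
  | imp φ ψ => φ.size + ψ.size + 1
  | all _ φ => φ.size + 1
  | box _ _ φ => φ.size + 1

/-- Simultaneous substitution of all free basic variables. -/
def instAll (σ : Nat → Nat ⊕ V) : Fml V → Fml V
  | atom P l => atom P (l.map fun v => match v with | Sum.inl n => σ n | w => w)
  | bot => bot
  | imp φ ψ => imp (instAll σ φ) (instAll σ ψ)
  | all x φ => all x (instAll (Function.update σ x (Sum.inl x)) φ)
  | box t X φ =>
      box t (X.image fun v => match v with | Sum.inl n => σ n | w => w)
        (instAll (fun n => if Sum.inl n ∈ X then σ n else Sum.inl n) φ)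

theorem size_subst (x e : Nat ⊕ V) : ∀ φ : Fml V, (φ.subst x e).size = φ.size := by
  intro φ
  induction φ with
  | atom P l => simp [subst, size]
  | bot => simp [subst, size]
  | imp φ ψ ihφ ihψ => simp [subst, size, ihφ, ihψ]
  | all y φ ih => by_cases h : x = Sum.inl y <;> simp [subst, size, h, ih]
  | box t X φ ih => by_cases h : x ∈ X <;> simp [subst, size, h, ih]

theorem size_instAll : ∀ (φ : Fml V) (σ : Nat → Nat ⊕ V), (φ.instAll σ).size = φ.size := by
  intro φ
  induction φ with
  | atom P l => intro σ; simp [instAll, size]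
  | bot => intro σ; simp [instAll, size]
  | imp φ ψ ihφ ihψ => intro σ; simp [instAll, size, ihφ, ihψ]
  | all y φ ih => intro σ; simp [instAll, size, ih]
  | box t X φ ih => intro σ; simp [instAll, size, ih]

end Fml

/-- The two logics considered in the paper. -/
inductive Logic : Type
  | folpb
  | fojt45

/-- Axioms of the systems: **A1** (a standard Hilbert axiomatization of classical
first-order logic), **A2**, **A3**, **B1**–**B5**, together with the Barcan axiom
**Bb** (for FOLPb only) and negative introspection **B6** (for FOJT45 only). -/
inductive IsAxiom {V : Type} [DecidableEq V] : Logic → Fml V → Prop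
  | a1k (L) (φ ψ : Fml V) : IsAxiom L (φ.imp (ψ.imp φ))
  | a1s (L) (φ ψ χ : Fml V) :
      IsAxiom L ((φ.imp (ψ.imp χ)).imp ((φ.imp ψ).imp (φ.imp χ)))
  | a1dne (L) (φ : Fml V) : IsAxiom L (φ.neg.neg.imp φ)
  | a1inst (L) (x : Nat) (e : Nat ⊕ V) (φ : Fml V) (h : φ.freeFor e (Sum.inl x)) :
      IsAxiom L ((Fml.all x φ).imp (φ.subst (Sum.inl x) e))
  | a1allImp (L) (x : Nat) (φ ψ : Fml V) :
      IsAxiom L ((Fml.all x (φ.imp ψ)).imp ((Fml.all x φ).imp (Fml.all x ψ)))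
  | a1vac (L) (x : Nat) (φ : Fml V) (h : Sum.inl x ∉ φ.fv) :
      IsAxiom L (φ.imp (Fml.all x φ))
  | a2 (L) (t : JTerm) (X : Finset (Nat ⊕ V)) (y : Nat ⊕ V) (φ : Fml V)
      (h : y ∉ φ.fv) :
      IsAxiom L ((Fml.box t (insert y X) φ).imp (Fml.box t X φ))
  | a3 (L) (t : JTerm) (X : Finset (Nat ⊕ V)) (y : Nat ⊕ V) (φ : Fml V) :
      IsAxiom L ((Fml.box t X φ).imp (Fml.box t (insert y X) φ))
  | b1 (L) (t : JTerm) (X : Finset (Nat ⊕ V)) (φ : Fml V) :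
      IsAxiom L ((Fml.box t X φ).imp φ)
  | b2 (L) (t s : JTerm) (X : Finset (Nat ⊕ V)) (φ ψ : Fml V) :
      IsAxiom L ((Fml.box t X (φ.imp ψ)).imp
        ((Fml.box s X φ).imp (Fml.box (t.app s) X ψ)))
  | b3l (L) (t s : JTerm) (X : Finset (Nat ⊕ V)) (φ : Fml V) :
      IsAxiom L ((Fml.box t X φ).imp (Fml.box (t.plus s) X φ))
  | b3r (L) (t s : JTerm) (X : Finset (Nat ⊕ V)) (φ : Fml V) :
      IsAxiom L ((Fml.box s X φ).imp (Fml.box (t.plus s) X φ))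
  | b4 (L) (t : JTerm) (X : Finset (Nat ⊕ V)) (φ : Fml V) :
      IsAxiom L ((Fml.box t X φ).imp (Fml.box t.bang X (Fml.box t X φ)))
  | b5 (L) (t : JTerm) (X : Finset (Nat ⊕ V)) (x : Nat) (φ : Fml V)
      (h : Sum.inl x ∉ X) :
      IsAxiom L ((Fml.box t X φ).imp (Fml.box (t.gen x) X (Fml.all x φ)))
  | bb (t : JTerm) (X : Finset (Nat ⊕ V)) (y : Nat) (φ : Fml V)
      (h : Sum.inl y ∉ X) :
      IsAxiom Logic.folpb
        ((Fml.all y (Fml.box t (insert (Sum.inl y) X) φ)).imp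
          (Fml.box t.bb X (Fml.all y φ)))
  | b6 (t : JTerm) (X : Finset (Nat ⊕ V)) (φ : Fml V) :
      IsAxiom Logic.fojt45
        ((Fml.box t X φ).neg.imp (Fml.box t.quest X (Fml.box t X φ).neg))

/-- Derivability from a set `Γ` of assumptions, with extra axioms from the constant
specification `CS`; generalization is only applied to variables not free in `Γ`. -/
inductive Deriv {V : Type} [DecidableEq V] (L : Logic) (CS : Set (Fml V))
    (Γ : Set (Fml V)) : Fml V → Prop
  | ax {φ : Fml V} : IsAxiom L φ → Deriv L CS Γ φ
  | cs {φ : Fml V} : φ ∈ CS → Deriv L CS Γ φ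
  | hyp {φ : Fml V} : φ ∈ Γ → Deriv L CS Γ φ
  | mp {φ ψ : Fml V} : Deriv L CS Γ (φ.imp ψ) → Deriv L CS Γ φ → Deriv L CS Γ ψ
  | genR {φ : Fml V} {x : Nat} : Deriv L CS Γ φ →
      (∀ ψ ∈ Γ, Sum.inl x ∉ ψ.fv) → Deriv L CS Γ (Fml.all x φ)

/-- `CS` is a constant specification: each member has the form `c : ψ` with `ψ` an axiom. -/
def IsCS {V : Type} [DecidableEq V] (L : Logic) (CS : Set (Fml V)) : Prop :=
  ∀ χ ∈ CS, ∃ (c : Nat) (φ : Fml V),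
    χ = Fml.box (JTerm.jconst c) ∅ φ ∧ IsAxiom L φ

/-- `CS` is axiomatically appropriate. -/
def AxAppropriate {V : Type} [DecidableEq V] (L : Logic) (CS : Set (Fml V)) : Prop :=
  ∀ φ : Fml V, IsAxiom L φ → ∃ c : Nat, Fml.box (JTerm.jconst c) ∅ φ ∈ CS

def Consistent {V : Type} [DecidableEq V] (L : Logic) (CS Γ : Set (Fml V)) : Prop :=
  ¬ Deriv L CS Γ Fml.bot

def MaxConsistent {V : Type} [DecidableEq V] (L : Logic) (CS Γ : Set (Fml V)) : Prop :=
  Consistent L CS Γ ∧ ∀ Δ : Set (Fml V), Γ ⊆ Δ → Consistent L CS Δ → Δ = Γ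

/-- Formulas of the basic language (no witness variables). -/
abbrev FmlB := Fml Empty

/-- Henkin formulas: formulas possibly containing witness variables (`Sum.inr`). -/
abbrev FmlW := Fml Nat

/-- A basic-language formula regarded as a Henkin formula. -/
def liftB : FmlB → FmlW := Fml.vmap fun e => e.elim

/-- A Henkin formula containing no witness variables. -/
def NoWitness (φ : FmlW) : Prop := ∀ v ∈ φ.allVars, v.isLeft = true

/-- Two formulas are variable variants: one is obtained from the other by a
bijective renaming of free individual variables. -/
def VarVariant {V : Type} [DecidableEq V] (φ ψ : Fml V) : Prop :=
  ∃ ρ : (Nat ⊕ V) → (Nat ⊕ V), Function.Bijective ρ ∧ ψ = Fml.renameFree ρ φ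

/-- A constant specification is variant closed. -/
def VariantClosed {V : Type} [DecidableEq V] (CS : Set (Fml V)) : Prop :=
  ∀ (φ ψ : Fml V) (c : Nat), VarVariant φ ψ →
    (Fml.box (JTerm.jconst c) ∅ φ ∈ CS ↔ Fml.box (JTerm.jconst c) ∅ ψ ∈ CS)

/-- The extension `CS(V)` of a basic constant specification to the language with
witness variables: justified axioms with some free basic variables replaced by
distinct witness variables. -/
def CSV (CS : Set FmlB) : Set FmlW :=
  {χ | ∃ (c : Nat) (φ : FmlB) (ρ : (Nat ⊕ Nat) → (Nat ⊕ Nat)),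
    Fml.box (JTerm.jconst c) ∅ φ ∈ CS ∧
    Function.Injective ρ ∧
    (∀ m : Nat, ρ (Sum.inr m) = Sum.inr m) ∧
    (∀ n : Nat, ρ (Sum.inl n) = Sum.inl n ∨ ∃ m : Nat, ρ (Sum.inl n) = Sum.inr m) ∧
    χ = Fml.box (JTerm.jconst c) ∅ (Fml.renameFree ρ (liftB φ))}

/-- `Γ^#`. -/
def sharp (Γ : Set FmlW) : Set FmlW :=
  {χ | ∃ (t : JTerm) (X : Finset (Nat ⊕ Nat)) (φ : FmlW),
    Fml.box t X φ ∈ Γ ∧ (Fml.box t X φ : FmlW).fbv = ∅ ∧ X = φ.wvars ∧ χ = φ.close}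

/-! ### Templates -/

inductive Tmpl : Type
  | pvar : Nat → Tmpl
  | neg : Tmpl → Tmpl
  | orr : Tmpl → Tmpl → Tmpl
  | andd : Tmpl → Tmpl → Tmpl
  | box : Tmpl → Tmpl

namespace Tmpl

def letters : Tmpl → Multiset Nat
  | pvar i => {i}
  | neg G => G.letters
  | orr G H => G.letters + H.letters
  | andd G H => G.letters + H.letters
  | box G => G.letters

/-- No propositional letter occurs more than once. -/
def IsTemplate (F : Tmpl) : Prop := F.letters.Nodup

def Positive : Tmpl → Prop
  | pvar _ => True
  | neg _ => False
  | orr G H => G.Positive ∧ H.Positive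
  | andd G H => G.Positive ∧ H.Positive
  | box G => G.Positive

def Disjunctive : Tmpl → Prop
  | pvar _ => True
  | neg _ => False
  | orr G H => G.Disjunctive ∧ H.Disjunctive
  | andd _ _ => False
  | box G => G.Disjunctive

end Tmpl

/-- The instantiation set `⟦F(φ⃗)⟧`, where the valuation `v` gives the Henkin formula
substituted for each propositional letter. -/
inductive Inst (v : Nat → FmlW) : Tmpl → FmlW → Prop
  | pvar (i : Nat) : Inst v (Tmpl.pvar i) (v i)
  | neg {G : Tmpl} {ψ : FmlW} : Inst v G ψ → Inst v (Tmpl.neg G) ψ.neg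
  | orr {G H : Tmpl} {ψ θ : FmlW} :
      Inst v G ψ → Inst v H θ → Inst v (Tmpl.orr G H) (ψ.orr θ)
  | andd {G H : Tmpl} {ψ θ : FmlW} :
      Inst v G ψ → Inst v H θ → Inst v (Tmpl.andd G H) (ψ.andd θ)
  | box {G : Tmpl} {ψ : FmlW} (t : JTerm) :
      Inst v G ψ → Inst v (Tmpl.box G) (Fml.box t ψ.wvars ψ)

/-- The set of negations of members of `⟦F(φ⃗)⟧`. -/
def NegInst (v : Nat → FmlW) (F : Tmpl) : Set FmlW :=
  {χ | ∃ ψ : FmlW, Inst v F ψ ∧ χ = ψ.neg}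

/-- `Δ` admits instantiation (relative to the basic constant specification `CS`). -/
def AdmitsInst (CS : Set FmlB) (Δ : Set FmlW) : Prop :=
  ∀ F : Tmpl, F.IsTemplate → F.Disjunctive →
    ∀ (v : Nat → FmlW) (q x : Nat) (φ : FmlW),
      Consistent Logic.folpb (CSV CS)
        (Δ ∪ NegInst (Function.update v q (Fml.all x φ)) F) →
      ∃ a : Nat,
        Consistent Logic.folpb (CSV CS)
          (Δ ∪ NegInst (Function.update v q (φ.subst (Sum.inl x) (Sum.inr a))) F)

/-! ### Fitting models -/

/-- A Fitting model for FOLPb with constant domain `D`. -/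
structure FModel (D : Type) [DecidableEq D] where
  W : Type
  nonempty : Nonempty W
  R : W → W → Prop
  refl : ∀ w, R w w
  trans : ∀ {u v w}, R u v → R v w → R u w
  I : Nat → W → List D → Prop
  E : JTerm → Fml D → Set W
  condApp : ∀ (t s : JTerm) (φ ψ : Fml D), E t (φ.imp ψ) ∩ E s φ ⊆ E (t.app s) ψ
  condPlus : ∀ (t s : JTerm) (φ : Fml D), E t φ ∪ E s φ ⊆ E (t.plus s) φ
  condBang : ∀ (t : JTerm) (φ : Fml D) (X : Finset (Nat ⊕ D)),
    (∀ x ∈ X, x.isRight = true) → φ.wvars ⊆ X →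
    E t φ ⊆ E t.bang (Fml.box t X φ)
  condClosure : ∀ (t : JTerm) (φ : Fml D) {w w'},
    w ∈ E t φ → R w w' → w' ∈ E t φ
  condInst : ∀ (t : JTerm) (φ : Fml D) (x : Nat) (a : D) {w},
    w ∈ E t φ → w ∈ E t (φ.subst (Sum.inl x) (Sum.inr a))
  condGen : ∀ (t : JTerm) (φ : Fml D) (x : Nat), E t φ ⊆ E (t.gen x) (Fml.all x φ)
  condB : ∀ (t : JTerm) (φ : Fml D) (y : Nat) {w},
    (∀ a : D, w ∈ E t (φ.subst (Sum.inl y) (Sum.inr a))) →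
    w ∈ E t.bb (Fml.all y φ)

/-- Truth of a (closed) `D`-formula at a world. -/
def Truth {D : Type} [DecidableEq D] (M : FModel D) : M.W → Fml D → Prop
  | w, .atom P l => ∃ ds : List D, l = ds.map Sum.inr ∧ M.I P w ds
  | _, .bot => False
  | w, .imp φ ψ => Truth M w φ → Truth M w ψ
  | w, .all x φ => ∀ a : D, Truth M w (φ.subst (Sum.inl x) (Sum.inr a))
  | w, .box t _ φ => w ∈ M.E t φ ∧
      ∀ w', M.R w w' → ∀ σ : Nat → Nat ⊕ D, (∀ n, ∃ a : D, σ n = Sum.inr a) →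
        Truth M w' (φ.instAll σ)
  termination_by _ φ => φ.size
  decreasing_by
    all_goals simp [Fml.size, Fml.size_subst, Fml.size_instAll]
    all_goals omega

/-- A basic-language formula as a `D`-formula. -/
def toD {D : Type} [DecidableEq D] : FmlB → Fml D := Fml.vmap fun e => e.elim

/-- Validity in a model: the universal closure is true at every world. -/
def Valid {D : Type} [DecidableEq D] (M : FModel D) (φ : FmlB) : Prop :=
  ∀ w : M.W, Truth M w (toD φ.close)

/-- The model meets the constant specification `CS`. -/
def Meets {D : Type} [DecidableEq D] (M : FModel D) (CS : Set FmlB) : Prop :=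
  ∀ (c : Nat) (φ : FmlB), Fml.box (JTerm.jconst c) ∅ φ ∈ CS →
    ∀ w : M.W, w ∈ M.E (JTerm.jconst c) (toD φ)

/-!
If every `¬ t :_X ψ` with `ψ ∈ ⟦G(φ⃗)⟧` already lies in `Γ`, then `Γ ∪ ⟦¬□G(φ⃗)⟧ = Γ` is
consistent. Otherwise maximality puts some `t :_X ψ` into `Γ`, with `X` the witness variables
of `ψ`; by B4 so is `!t :_X (t :_X ψ)`, hence `t :_X ψ`, being closed, lies in `Γ^#`. Then B1
derives `ψ` from `Γ^#`, which contradicts `¬ψ ∈ ⟦¬G(φ⃗)⟧`.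
-/

section Derivations

variable {V : Type} [DecidableEq V] {L : Logic} {CS Γ : Set (Fml V)}

namespace Deriv

theorem imp_self (φ : Fml V) : Deriv L CS Γ (φ.imp φ) :=
  .mp (.mp (.ax (.a1s L φ (φ.imp φ) φ)) (.ax (.a1k L φ (φ.imp φ)))) (.ax (.a1k L φ φ))

theorem imp_trans {φ ψ χ : Fml V} (hψχ : Deriv L CS Γ (ψ.imp χ))
    (hφψ : Deriv L CS Γ (φ.imp ψ)) : Deriv L CS Γ (φ.imp χ) :=
  .mp (.mp (.ax (.a1s L φ ψ χ)) (.mp (.ax (.a1k L (ψ.imp χ) φ)) hψχ)) hφψ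

theorem deduction {φ ψ : Fml V} (h : Deriv L CS (Γ ∪ {φ}) ψ) :
    Deriv L CS Γ (φ.imp ψ) := by
  induction h with
  | ax hax => exact .mp (.ax (.a1k L _ _)) (.ax hax)
  | cs hcs => exact .mp (.ax (.a1k L _ _)) (.cs hcs)
  | hyp hmem =>
    rcases hmem with hmem | rfl
    · exact .mp (.ax (.a1k L _ _)) (.hyp hmem)
    · exact imp_self _
  | mp _ _ ih₁ ih₂ => exact .mp (.mp (.ax (.a1s L _ _ _)) ih₁) ih₂
  | @genR χ x _ hfresh ih =>
    -- `x` is not free in `φ`, so `φ → ∀x φ` is an axiom.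
    have hall : Deriv L CS Γ ((Fml.all x φ).imp (Fml.all x χ)) :=
      .mp (.ax (.a1allImp L x φ χ)) (.genR ih fun ψ hψ => hfresh ψ (Or.inl hψ))
    exact imp_trans hall (.ax (.a1vac L x φ (hfresh φ (Or.inr rfl))))

end Deriv

namespace MaxConsistent

theorem mem_of_deriv (hmax : MaxConsistent L CS Γ) {φ : Fml V} (h : Deriv L CS Γ φ) :
    φ ∈ Γ := by
  have hcons : Consistent L CS (Γ ∪ {φ}) := fun hbot => hmax.1 (.mp hbot.deduction h)
  rw [← hmax.2 _ Set.subset_union_left hcons]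
  exact Or.inr rfl

theorem deriv_neg_of_not_mem (hmax : MaxConsistent L CS Γ) {φ : Fml V} (h : φ ∉ Γ) :
    Deriv L CS Γ φ.neg := by
  refine Deriv.deduction (not_not.mp fun hcons => h ?_)
  rw [← hmax.2 _ Set.subset_union_left hcons]
  exact Or.inr rfl

theorem mem_of_neg_not_mem (hmax : MaxConsistent L CS Γ) {φ : Fml V} (h : φ.neg ∉ Γ) :
    φ ∈ Γ :=
  hmax.mem_of_deriv (.mp (.ax (.a1dne L φ)) (hmax.deriv_neg_of_not_mem h))

end MaxConsistent

end Derivations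

namespace Fml

variable {V : Type} [DecidableEq V]

theorem isRight_of_mem_wvars {φ : Fml V} {x : Nat ⊕ V} (hx : x ∈ φ.wvars) : x.isRight :=
  (Finset.mem_filter.mp hx).2

theorem fbv_box_eq_empty {X : Finset (Nat ⊕ V)} (hX : ∀ x ∈ X, x.isRight)
    (t : JTerm) (φ : Fml V) : (Fml.box t X φ).fbv = ∅ := by
  refine Finset.eq_empty_iff_forall_notMem.mpr fun n hn => ?_
  obtain ⟨x, hx, hn⟩ := Finset.mem_biUnion.mp hn
  cases x with
  | inl m => simpa using hX _ hx
  | inr m => simp at hn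

theorem close_eq_self {φ : Fml V} (h : φ.fbv = ∅) : φ.close = φ := by
  rw [close, h, Finset.toList_empty]
  rfl

theorem wvars_box_wvars (t : JTerm) (φ : Fml V) :
    (Fml.box t φ.wvars φ).wvars = φ.wvars := by
  ext x
  simp only [wvars, allVars, Finset.mem_filter, Finset.mem_union, Finset.mem_image]
  constructor
  · rintro ⟨(h | ⟨n, _, rfl⟩) | h, hx⟩
    · exact h
    · simp at hx
    · exact ⟨h, hx⟩
  · intro h
    exact ⟨Or.inl (Or.inl h), h.2⟩

end Fml

theorem MaxConsistent.box_mem_sharp {L : Logic} {CS Γ : Set FmlW}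
    (hmax : MaxConsistent L CS Γ) {t : JTerm} {ψ : FmlW}
    (h : Fml.box t ψ.wvars ψ ∈ Γ) : Fml.box t ψ.wvars ψ ∈ sharp Γ := by
  have hX : ∀ x ∈ ψ.wvars, x.isRight := fun _ => Fml.isRight_of_mem_wvars
  refine ⟨t.bang, ψ.wvars, _, hmax.mem_of_deriv (.mp (.ax (.b4 L t _ ψ)) (.hyp h)),
    Fml.fbv_box_eq_empty hX t.bang _,
    (Fml.wvars_box_wvars t ψ).symm, (Fml.close_eq_self (Fml.fbv_box_eq_empty hX t ψ)).symm⟩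

theorem up_consistency_general (CS : Set FmlB) (G : Tmpl)
    (Γ : Set FmlW) (hmax : MaxConsistent Logic.folpb (CSV CS) Γ)
    (v : Nat → FmlW)
    (h : Consistent Logic.folpb (CSV CS) (sharp Γ ∪ NegInst v G)) :
    Consistent Logic.folpb (CSV CS) (Γ ∪ NegInst v (Tmpl.box G)) := by
  intro hbot
  by_cases hsub : NegInst v (Tmpl.box G) ⊆ Γ
  · exact hmax.1 (by rwa [Set.union_eq_self_of_subset_right hsub] at hbot)
  obtain ⟨_, ⟨_, hinst, rfl⟩, hnot⟩ := Set.not_subset.mp hsub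
  cases hinst with
  | box t hG =>
    have hsharp := hmax.box_mem_sharp (hmax.mem_of_neg_not_mem hnot)
    exact h (.mp (.hyp (Or.inr ⟨_, hG, rfl⟩)) (.mp (.ax (.b1 _ t _ _)) (.hyp (Or.inl hsharp))))

/-- **Up consistency**: for `F = □G` and `Γ` a `CS(V)`-maximally consistent set, if
`Γ^# ∪ ⟦¬G(φ⃗)⟧` is `CS(V)`-consistent then so is `Γ ∪ ⟦¬F(φ⃗)⟧`. -/
theorem up_consistency (CS : Set FmlB) (hCS : IsCS Logic.folpb CS)
    (hvc : VariantClosed CS) (hApp : AxAppropriate Logic.folpb CS)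
    (G : Tmpl) (hT : (Tmpl.box G).IsTemplate)
    (Γ : Set FmlW) (hmax : MaxConsistent Logic.folpb (CSV CS) Γ)
    (v : Nat → FmlW)
    (h : Consistent Logic.folpb (CSV CS) (sharp Γ ∪ NegInst v G)) :
    Consistent Logic.folpb (CSV CS) (Γ ∪ NegInst v (Tmpl.box G)) :=
  up_consistency_general CS G Γ hmax v h
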